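/- arXiv:1501.03107 — 2 statements merged into one kernel-verified Lean document; each statement's English description precedes it below -/
import Mathlib

section
/- Let c_β′ denote the derivative of c_β. (a) For 0 < β ≤ β_c = log 4, the function w ↦ c_β′(w) is strictly concave on (0, ∞). (b) For β > β_c, setting w_c(β) = cosh⁻¹((1/2)e^β − 4e^{−β}) ≥ 0, the function w ↦ c_β′(w) is strictly convex on (0, w_c(β)) and strictly concave on (w_c(β), ∞). -/
noncomputable section

def cBC (β t : ℝ) : ℝ :=
  Real.log ((1 + Real.exp (-β) * (Real.exp t + Real.exp (-t))) / (1 + 2 * Real.exp (-β)))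

/-!
With `a = e^{-β}` one has `c_β′(t) = 2a sinh t / (1 + 2a cosh t)`, and a direct computation gives
`c_β‴(t) = 2a sinh t (1 - 8a² - 2a cosh t) / (1 + 2a cosh t)³`.
For `t > 0` the sign of `c_β‴` is therefore that of `1/(2a) - 4a - cosh t = ½e^β - 4e^{-β} - cosh t`.
If `β ≤ log 4` this threshold is at most `1 < cosh t`; otherwise it exceeds `1` and is crossed
exactly once, at `w_c = arcosh (½e^β - 4e^{-β})`.
-/

open Real Set

namespace BlumeCapel

def meanSpin (a t : ℝ) : ℝ :=
  2 * a * sinh t / (1 + 2 * a * cosh t)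

variable {a : ℝ}

lemma one_add_two_mul_cosh_pos (ha : 0 ≤ a) (t : ℝ) : 0 < 1 + 2 * a * cosh t := by
  have := cosh_pos t
  positivity

lemma cBC_eq_log_sub_log (β t : ℝ) :
    cBC β t = log (1 + 2 * exp (-β) * cosh t) - log (1 + 2 * exp (-β)) := by
  rw [cBC, log_div (by positivity) (by positivity), cosh_eq]
  ring_nf

lemma deriv_cBC (β : ℝ) : deriv (cBC β) = meanSpin (exp (-β)) := by
  funext t
  have hpos := one_add_two_mul_cosh_pos (exp_pos (-β)).le t
  have h := (((hasDerivAt_cosh t).const_mul (2 * exp (-β))).const_add 1).log hpos.ne'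
  rw [funext (cBC_eq_log_sub_log β), (h.sub_const _).deriv, meanSpin]

lemma hasDerivAt_meanSpin (ha : 0 ≤ a) (t : ℝ) :
    HasDerivAt (meanSpin a) ((2 * a * cosh t + 4 * a ^ 2) / (1 + 2 * a * cosh t) ^ 2) t := by
  have h := ((hasDerivAt_sinh t).const_mul (2 * a)).div
    (((hasDerivAt_cosh t).const_mul (2 * a)).const_add 1) (one_add_two_mul_cosh_pos ha t).ne'
  refine h.congr_deriv ?_
  congr 1
  linear_combination (4 * a ^ 2) * cosh_sq_sub_sinh_sq t

lemma hasDerivAt_deriv_meanSpin (ha : 0 ≤ a) (t : ℝ) :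
    HasDerivAt (fun t ↦ (2 * a * cosh t + 4 * a ^ 2) / (1 + 2 * a * cosh t) ^ 2)
      (2 * a * sinh t * (1 - 8 * a ^ 2 - 2 * a * cosh t) / (1 + 2 * a * cosh t) ^ 3) t := by
  have hpos := one_add_two_mul_cosh_pos ha t
  have h := (((hasDerivAt_cosh t).const_mul (2 * a)).add_const (4 * a ^ 2)).div
    ((((hasDerivAt_cosh t).const_mul (2 * a)).const_add 1).pow 2) (pow_ne_zero 2 hpos.ne')
  refine h.congr_deriv ?_
  simp only [Pi.pow_apply]
  field_simp
  ring

lemma iterate_deriv_two_meanSpin (ha : 0 ≤ a) (t : ℝ) :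
    deriv^[2] (meanSpin a) t =
      2 * a * sinh t * (1 - 8 * a ^ 2 - 2 * a * cosh t) / (1 + 2 * a * cosh t) ^ 3 := by
  rw [Function.iterate_succ_apply, Function.iterate_one,
    funext fun t ↦ (hasDerivAt_meanSpin ha t).deriv, (hasDerivAt_deriv_meanSpin ha t).deriv]

lemma continuous_meanSpin (ha : 0 ≤ a) : Continuous (meanSpin a) :=
  continuous_iff_continuousAt.2 fun t ↦ (hasDerivAt_meanSpin ha t).continuousAt

variable {s : Set ℝ}

lemma strictConvexOn_meanSpin (ha : 0 < a) (hs : Convex ℝ s)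
    (hcosh : ∀ t ∈ s, 0 < t ∧ 2 * a * cosh t < 1 - 8 * a ^ 2) :
    StrictConvexOn ℝ s (meanSpin a) := by
  refine strictConvexOn_of_deriv2_pos' hs (continuous_meanSpin ha.le).continuousOn fun t ht ↦ ?_
  obtain ⟨ht, hlt⟩ := hcosh t ht
  rw [iterate_deriv_two_meanSpin ha.le]
  have := sinh_pos_iff.2 ht
  have := one_add_two_mul_cosh_pos ha.le t
  have : 0 < 1 - 8 * a ^ 2 - 2 * a * cosh t := by linarith
  positivity

lemma strictConcaveOn_meanSpin (ha : 0 < a) (hs : Convex ℝ s)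
    (hcosh : ∀ t ∈ s, 0 < t ∧ 1 - 8 * a ^ 2 < 2 * a * cosh t) :
    StrictConcaveOn ℝ s (meanSpin a) := by
  refine strictConcaveOn_of_deriv2_neg' hs (continuous_meanSpin ha.le).continuousOn fun t ht ↦ ?_
  obtain ⟨ht, hgt⟩ := hcosh t ht
  rw [iterate_deriv_two_meanSpin ha.le]
  have := sinh_pos_iff.2 ht
  have := one_add_two_mul_cosh_pos ha.le t
  exact div_neg_of_neg_of_pos (mul_neg_of_pos_of_neg (by positivity) (by linarith)) (by positivity)

end BlumeCapel

open BlumeCapel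

theorem blume_capel_cprime_concavity_general (β : ℝ) :
    (β ≤ Real.log 4 → StrictConcaveOn ℝ (Set.Ioi (0 : ℝ)) (deriv (cBC β))) ∧
    (Real.log 4 < β → ∃ wc : ℝ, 0 ≤ wc ∧
      Real.cosh wc = (1 / 2) * Real.exp β - 4 * Real.exp (-β) ∧
      StrictConvexOn ℝ (Set.Ioo (0 : ℝ) wc) (deriv (cBC β)) ∧
      StrictConcaveOn ℝ (Set.Ioi wc) (deriv (cBC β))) := by
  have hexp_neg_log : exp (-log 4) = 1 / 4 := by
    rw [exp_neg, exp_log four_pos, one_div]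
  have hexp : exp β = (exp (-β))⁻¹ := by rw [exp_neg, inv_inv]
  set a := exp (-β)
  have ha : 0 < a := exp_pos _
  rw [deriv_cBC]
  refine ⟨fun hβ ↦ ?_, fun hβ ↦ ?_⟩
  · have ha4 : 1 / 4 ≤ a := hexp_neg_log ▸ exp_le_exp.2 (neg_le_neg hβ)
    refine strictConcaveOn_meanSpin ha (convex_Ioi 0) fun t ht ↦ ⟨ht, ?_⟩
    have hcosh := one_lt_cosh.2 (ne_of_gt ht)
    nlinarith
  · have ha4 : a < 1 / 4 := hexp_neg_log ▸ exp_lt_exp.2 (neg_lt_neg hβ)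
    set v := 1 / 2 * exp β - 4 * a
    have hv : 2 * a * v = 1 - 8 * a ^ 2 := by
      simp only [v, hexp]
      field_simp
      ring
    have hv1 : 1 ≤ v := by nlinarith
    refine ⟨arcosh v, arcosh_nonneg hv1, cosh_arcosh hv1, ?_, ?_⟩
    · refine strictConvexOn_meanSpin ha (convex_Ioo _ _) fun t ⟨ht0, ht⟩ ↦ ⟨ht0, ?_⟩
      have hcosh := cosh_strictMonoOn ht0.le (arcosh_nonneg hv1) ht
      rw [cosh_arcosh hv1] at hcosh
      nlinarith
    · refine strictConcaveOn_meanSpin ha (convex_Ioi _) fun t ht ↦ ?_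
      have ht0 := (arcosh_nonneg hv1).trans_lt ht
      have hcosh := cosh_strictMonoOn (arcosh_nonneg hv1) ht0.le ht
      rw [cosh_arcosh hv1] at hcosh
      exact ⟨ht0, by nlinarith⟩

/-- **Concavity behavior of `c_β′`** (Theorem 3.5 of Ellis–Otto–Touchette).
(a) For `0 < β ≤ β_c = log 4`, `c_β′` is strictly concave on `(0,∞)`.
(b) For `β > β_c`, with `w_c(β) = cosh⁻¹((1/2)e^β − 4e^{−β}) ≥ 0`, `c_β′` is
strictly convex on `(0, w_c(β))` and strictly concave on `(w_c(β), ∞)`. -/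
theorem blume_capel_cprime_concavity (β : ℝ) (hβ0 : 0 < β) :
    (β ≤ Real.log 4 → StrictConcaveOn ℝ (Set.Ioi (0 : ℝ)) (deriv (cBC β))) ∧
    (Real.log 4 < β → ∃ wc : ℝ, 0 ≤ wc ∧
      Real.cosh wc = (1 / 2) * Real.exp β - 4 * Real.exp (-β) ∧
      StrictConvexOn ℝ (Set.Ioo (0 : ℝ) wc) (deriv (cBC β)) ∧
      StrictConcaveOn ℝ (Set.Ioi wc) (deriv (cBC β))) :=
  blume_capel_cprime_concavity_general β
end
end

section
/- Let β > 0, K > 0 and z̃ ∈ (−1,1). If z̃ is a local minimum point of G_{β,K} with G_{β,K}″(z̃) > 0, then z̃ is a local minimum point of I_{β,K} with I_{β,K}″(z̃) > 0; conversely, if z̃ is a local minimum point of I_{β,K} with I_{β,K}″(z̃) > 0, then z̃ is a local minimum point of G_{β,K} with G_{β,K}″(z̃) > 0. (In particular, under strict convexity at the minimum points, the local minimum points of G_{β,K} and of I_{β,K} coincide.) -/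
noncomputable section

/-- Legendre–Fenchel transform `J_β(z) = sup_t {tz − c_β(t)}` (finite on `[-1,1]`). -/
def JBC (β z : ℝ) : ℝ := ⨆ t : ℝ, (t * z - cBC β t)

/-- Free energy functional `G_{β,K}(z) = βKz² − c_β(2βKz)`. -/
def GBC (β K z : ℝ) : ℝ := β * K * z ^ 2 - cBC β (2 * β * K * z)

/-- Rate function `I_{β,K}(z) = J_β(z) − βKz² − inf_y {J_β(y) − βKy²}` (the infimum
over `ℝ` equals the infimum over `[-1,1]` since `J_β = +∞` off `[-1,1]`). -/
def IBC (β K z : ℝ) : ℝ :=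
  JBC β z - β * K * z ^ 2 -
    sInf ((fun y => JBC β y - β * K * y ^ 2) '' Set.Icc (-1 : ℝ) 1)

/-!
Write `m = 2βK`. Then `G'(z) = m (z - c_β'(m z))`, and since `J_β' = (c_β')⁻¹` on `(-1, 1)`,
`I'(z) = (c_β')⁻¹(z) - m z`; both vanish exactly when `c_β'(m z) = z`. At such a point
`G''(z) = m (1 - m c_β''(m z))` and `I''(z) = (1 - m c_β''(m z)) / c_β''(m z)`, which have the
same sign because `c_β'' > 0`. Finally, by the second derivative test, a local minimum with
positive second derivative is the same as a critical point with positive second derivative.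
-/

theorem isLocalMin_and_deriv_deriv_pos_iff {f : ℝ → ℝ} {x : ℝ} (hf : ContinuousAt f x) :
    (IsLocalMin f x ∧ 0 < deriv (deriv f) x) ↔ (deriv f x = 0 ∧ 0 < deriv (deriv f) x) :=
  ⟨fun ⟨hmin, hpos⟩ ↦ ⟨hmin.deriv_eq_zero, hpos⟩,
    fun ⟨hcrit, hpos⟩ ↦ ⟨isLocalMin_of_deriv_deriv_pos hpos hcrit hf, hpos⟩⟩

lemma sub_sq_mul_pos_iff_inv_sub_pos {m c : ℝ} (hm : 0 < m) (hc : 0 < c) :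
    0 < m - m ^ 2 * c ↔ 0 < c⁻¹ - m := by
  rw [show m - m ^ 2 * c = m * (1 - m * c) by ring, show c⁻¹ - m = (1 - m * c) / c by
    field_simp, mul_pos_iff_of_pos_left hm, div_pos_iff_of_pos_right hc]

namespace BlumeCapel

open Real Set

/-- `∑_{s ∈ {-1, 0, 1}} e^{-βs² + ts}`, so `c_β(t) = log (spinSum β t / spinSum β 0)`. -/
def spinSum (β t : ℝ) : ℝ := 1 + exp (-β) * (exp t + exp (-t))

def cBC' (β t : ℝ) : ℝ := exp (-β) * (exp t - exp (-t)) / spinSum β t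

def cBC'' (β t : ℝ) : ℝ :=
  (exp (-β) * (exp t + exp (-t)) + 4 * exp (-β) ^ 2) / spinSum β t ^ 2

/-- `(c_β')⁻¹`: with `x = e^t` and `a = e^{-β}`, the equation `c_β'(t) = z` is the quadratic
`a(1 - z)x² - zx - a(1 + z) = 0`. -/
def tBC (β z : ℝ) : ℝ :=
  log ((z + √(z ^ 2 + 4 * exp (-β) ^ 2 * (1 - z ^ 2))) / (2 * exp (-β) * (1 - z)))

lemma spinSum_pos (β t : ℝ) : 0 < spinSum β t := by unfold spinSum; positivity

lemma hasDerivAt_spinSum (β t : ℝ) :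
    HasDerivAt (spinSum β) (exp (-β) * (exp t - exp (-t))) t := by
  have h := (((hasDerivAt_exp t).add (hasDerivAt_neg t).exp).const_mul (exp (-β))).const_add 1
  refine h.congr_deriv ?_
  ring

lemma cBC_eq (β t : ℝ) : cBC β t = log (spinSum β t) - log (1 + 2 * exp (-β)) :=
  log_div (spinSum_pos β t).ne' (by positivity)

lemma hasDerivAt_cBC (β t : ℝ) : HasDerivAt (cBC β) (cBC' β t) t := by
  rw [show cBC β = fun t ↦ log (spinSum β t) - log (1 + 2 * exp (-β)) from funext (cBC_eq β)]
  exact ((hasDerivAt_spinSum β t).log (spinSum_pos β t).ne').sub_const _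

lemma hasDerivAt_cBC' (β t : ℝ) : HasDerivAt (cBC' β) (cBC'' β t) t := by
  have hnum : HasDerivAt (fun t ↦ exp (-β) * (exp t - exp (-t)))
      (exp (-β) * (exp t + exp (-t))) t := by
    refine (((hasDerivAt_exp t).sub (hasDerivAt_neg t).exp).const_mul _).congr_deriv ?_
    ring
  refine (hnum.div (hasDerivAt_spinSum β t) (spinSum_pos β t).ne').congr_deriv ?_
  have hexp : exp t * exp (-t) = 1 := by rw [← exp_add, add_neg_cancel, exp_zero]
  unfold cBC'' spinSum
  congr 1
  linear_combination (4 * exp (-β) ^ 2) * hexp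

lemma cBC''_pos (β t : ℝ) : 0 < cBC'' β t := by
  have := spinSum_pos β t
  unfold cBC''
  positivity

lemma strictMono_cBC' (β : ℝ) : StrictMono (cBC' β) :=
  strictMono_of_hasDerivAt_pos (hasDerivAt_cBC' β) (cBC''_pos β)

section

variable {β z : ℝ}

lemma tBC_arg_pos (hz : z ∈ Ioo (-1 : ℝ) 1) :
    0 < (z + √(z ^ 2 + 4 * exp (-β) ^ 2 * (1 - z ^ 2))) / (2 * exp (-β) * (1 - z)) := by
  have ha : 0 < exp (-β) := exp_pos _
  have hz1 : 0 < 1 - z := by linarith [hz.2]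
  have hgap : 0 < 4 * exp (-β) ^ 2 * (1 - z ^ 2) := by
    have : 0 < 1 - z ^ 2 := by nlinarith [hz.1, hz.2]
    positivity
  have hs := sq_sqrt (by positivity : 0 ≤ z ^ 2 + 4 * exp (-β) ^ 2 * (1 - z ^ 2))
  have hs0 := sqrt_nonneg (z ^ 2 + 4 * exp (-β) ^ 2 * (1 - z ^ 2))
  have hnum : 0 < z + √(z ^ 2 + 4 * exp (-β) ^ 2 * (1 - z ^ 2)) := by nlinarith
  positivity

lemma cBC'_tBC (hz : z ∈ Ioo (-1 : ℝ) 1) : cBC' β (tBC β z) = z := by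
  have hx : exp (tBC β z) = _ := exp_log (tBC_arg_pos hz)
  rw [cBC', spinSum, exp_neg (tBC β z)]
  set a := exp (-β)
  set s := √(z ^ 2 + 4 * a ^ 2 * (1 - z ^ 2))
  set x := exp (tBC β z)
  have ha : 0 < a := exp_pos _
  have hz1 : 0 < 1 - z := by linarith [hz.2]
  have hx0 : 0 < x := exp_pos _
  have hs : s ^ 2 = z ^ 2 + 4 * a ^ 2 * (1 - z ^ 2) := by
    have : 0 < 1 - z ^ 2 := by nlinarith [hz.1, hz.2]
    exact sq_sqrt (by positivity)
  replace hx : 2 * a * (1 - z) * x = z + s := by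
    rw [hx]
    field_simp
  have hquad : a * (1 - z) * x ^ 2 - z * x - a * (1 + z) = 0 := by
    have h : 4 * a * (1 - z) * (a * (1 - z) * x ^ 2 - z * x - a * (1 + z)) = 0 := by
      linear_combination (2 * a * (1 - z) * x + z + s - 2 * z) * hx + hs
    simpa [ha.ne', hz1.ne'] using h
  rw [div_eq_iff (by positivity)]
  field_simp
  linear_combination hquad

lemma tBC_eq_iff (hz : z ∈ Ioo (-1 : ℝ) 1) {t : ℝ} : tBC β z = t ↔ cBC' β t = z := by
  constructor
  · rintro rfl
    exact cBC'_tBC hz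
  · intro h
    exact (strictMono_cBC' β).injective ((cBC'_tBC hz).trans h.symm)

lemma continuousAt_tBC (hz : z ∈ Ioo (-1 : ℝ) 1) : ContinuousAt (tBC β) z := by
  have hz1 : 1 - z ≠ 0 := by linarith [hz.2]
  refine ContinuousAt.log ?_ (tBC_arg_pos hz).ne'
  exact ContinuousAt.div (by fun_prop) (by fun_prop) (by positivity)

lemma hasDerivAt_tBC (hz : z ∈ Ioo (-1 : ℝ) 1) :
    HasDerivAt (tBC β) (cBC'' β (tBC β z))⁻¹ z :=
  (hasDerivAt_cBC' β _).of_local_left_inverse (continuousAt_tBC hz) (cBC''_pos β _).ne' <| by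
    filter_upwards [Ioo_mem_nhds hz.1 hz.2] with y hy using cBC'_tBC hy

/-- `t ↦ c_β(t) - tz` is convex with a critical point at `tBC β z`. -/
lemma mul_sub_cBC_le_tBC (hz : z ∈ Ioo (-1 : ℝ) 1) (t : ℝ) :
    t * z - cBC β t ≤ tBC β z * z - cBC β (tBC β z) := by
  have hψ (s : ℝ) : HasDerivAt (fun s ↦ cBC β s - s * z) (cBC' β s - z) s :=
    (hasDerivAt_cBC β s).sub (hasDerivAt_mul_const z)
  have hconv : ConvexOn ℝ univ (fun s ↦ cBC β s - s * z) := by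
    refine Monotone.convexOn_univ_of_deriv (fun s ↦ (hψ s).differentiableAt) ?_
    rw [funext fun s ↦ (hψ s).deriv]
    exact fun s s' hss' ↦ sub_le_sub_right ((strictMono_cBC' β).monotone hss') z
  have hmin := hconv.isMinOn_of_rightDeriv_eq_zero (by simp) <| by
    rw [(hψ _).hasDerivWithinAt.derivWithin (uniqueDiffWithinAt_Ioi _), cBC'_tBC hz, sub_self]
  have h : cBC β (tBC β z) - tBC β z * z ≤ cBC β t - t * z := hmin (mem_univ t)
  linarith

lemma JBC_eq (hz : z ∈ Ioo (-1 : ℝ) 1) :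
    JBC β z = tBC β z * z - cBC β (tBC β z) :=
  le_antisymm (ciSup_le (mul_sub_cBC_le_tBC hz))
    (le_ciSup ⟨_, forall_mem_range.2 (mul_sub_cBC_le_tBC hz)⟩ (tBC β z))

lemma hasDerivAt_JBC (hz : z ∈ Ioo (-1 : ℝ) 1) :
    HasDerivAt (JBC β) (tBC β z) z := by
  have ht := hasDerivAt_tBC (β := β) hz
  have h : HasDerivAt (fun y ↦ tBC β y * y - cBC β (tBC β y)) (tBC β z) z := by
    refine ((ht.mul (hasDerivAt_id z)).sub ((hasDerivAt_cBC β _).comp z ht)).congr_deriv ?_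
    rw [cBC'_tBC hz, id]
    ring
  refine h.congr_of_eventuallyEq ?_
  filter_upwards [Ioo_mem_nhds hz.1 hz.2] with y hy using JBC_eq hy

end

lemma hasDerivAt_GBC (β K y : ℝ) :
    HasDerivAt (GBC β K) (2 * β * K * y - 2 * β * K * cBC' β (2 * β * K * y)) y := by
  have hlin := (hasDerivAt_id y).const_mul (2 * β * K)
  refine (((hasDerivAt_pow 2 y).const_mul (β * K)).sub
    ((hasDerivAt_cBC β _).comp y hlin)).congr_deriv ?_
  simp only [id]
  ring

lemma deriv_deriv_GBC (β K z : ℝ) :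
    deriv (deriv (GBC β K)) z = 2 * β * K - (2 * β * K) ^ 2 * cBC'' β (2 * β * K * z) := by
  have hlin := (hasDerivAt_id z).const_mul (2 * β * K)
  rw [funext fun y ↦ (hasDerivAt_GBC β K y).deriv]
  refine (hlin.sub (((hasDerivAt_cBC' β _).comp z hlin).const_mul _)).deriv.trans ?_
  simp only [id]
  ring

lemma hasDerivAt_IBC (β K : ℝ) {z : ℝ} (hz : z ∈ Ioo (-1 : ℝ) 1) :
    HasDerivAt (IBC β K) (tBC β z - 2 * β * K * z) z := by
  have hquad := (hasDerivAt_pow 2 z).const_mul (β * K)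
  refine (((hasDerivAt_JBC hz).sub hquad).sub_const _).congr_deriv ?_
  ring

lemma deriv_deriv_IBC (β K : ℝ) {z : ℝ} (hz : z ∈ Ioo (-1 : ℝ) 1) :
    deriv (deriv (IBC β K)) z = (cBC'' β (tBC β z))⁻¹ - 2 * β * K := by
  have h := (hasDerivAt_tBC (β := β) hz).sub ((hasDerivAt_id z).const_mul (2 * β * K))
  refine (h.congr_of_eventuallyEq ?_).deriv.trans (by simp)
  filter_upwards [Ioo_mem_nhds hz.1 hz.2] with y hy using (hasDerivAt_IBC β K hy).deriv

end BlumeCapel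

open BlumeCapel in
/-- **Local minimum points of `G_{β,K}` and `I_{β,K}` coincide** (Lemma 5.5 in the
survey): for `z̃ ∈ (−1,1)`, `z̃` is a local minimum point of `G_{β,K}` with
`G_{β,K}″(z̃) > 0` if and only if `z̃` is a local minimum point of `I_{β,K}` with
`I_{β,K}″(z̃) > 0`. -/
theorem blume_capel_local_min_equiv (β K : ℝ) (hβ : 0 < β) (hK : 0 < K)
    (z : ℝ) (hz : z ∈ Set.Ioo (-1 : ℝ) 1) :
    (IsLocalMin (GBC β K) z ∧ 0 < deriv (deriv (GBC β K)) z) ↔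
    (IsLocalMin (IBC β K) z ∧ 0 < deriv (deriv (IBC β K)) z) := by
  have hm : 0 < 2 * β * K := by positivity
  rw [isLocalMin_and_deriv_deriv_pos_iff (hasDerivAt_GBC β K z).continuousAt,
    isLocalMin_and_deriv_deriv_pos_iff (hasDerivAt_IBC β K hz).continuousAt,
    (hasDerivAt_GBC β K z).deriv, (hasDerivAt_IBC β K hz).deriv,
    deriv_deriv_GBC, deriv_deriv_IBC β K hz]
  have hcrit : 2 * β * K * z - 2 * β * K * cBC' β (2 * β * K * z) = 0 ↔
      tBC β z - 2 * β * K * z = 0 := by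
    rw [sub_eq_zero, sub_eq_zero, tBC_eq_iff hz, mul_right_inj' hm.ne', eq_comm]
  rw [hcrit]
  refine and_congr_right fun h ↦ ?_
  rw [sub_eq_zero.1 h]
  exact sub_sq_mul_pos_iff_inv_sub_pos hm (cBC''_pos β _)

end
end
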